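/- arXiv:1410.8329 — 2 statements merged into one kernel-verified Lean document; each statement's English description precedes it below -/
import Mathlib

section
/- Let λ be a k-strict partition of length ℓ and set A_ℓ(λ) := {(i,j) : 1 ≤ i < j ≤ ℓ, λ_i + λ_j ≤ 2k + j − i}. Then in ℤ[c,t]: Θ_λ(c|t) = Σ_{S ⊆ A_ℓ(λ)} Q^{β(λ)}_{ν(S)}(c|t), the sum over all subsets S of A_ℓ(λ), where ν(S) := (Π_{(i,j)∈S} R_{ij}) λ and Q^ρ_α(c|t) := Π_{1≤i<j≤ℓ} (1−R_{ij})(1+R_{ij})^{-1} c^ρ_α. -/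
open scoped Classical

noncomputable section

/-- The polynomial ring ℤ[c,t]: variables `Sum.inl p` (p ≥ 1) are the `c` variables,
variables `Sum.inr i` (i ≥ 1) are the `t` variables. -/
abbrev P : Type := MvPolynomial (ℕ ⊕ ℕ) ℤ

/-- t_r, with the convention t_r = t_{-r} for r < 0. -/
def tvar (r : ℤ) : P := MvPolynomial.X (Sum.inr r.natAbs)

/-- c_p, with c_0 = 1 and c_p = 0 for p < 0. -/
def cvar (p : ℤ) : P :=
  if p = 0 then 1 else if p < 0 then 0 else MvPolynomial.X (Sum.inl p.toNat)

def negT (i : ℕ) : P := - MvPolynomial.X (Sum.inr i)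

/-- e_j(-t_1,…,-t_m). -/
def esymNT (m j : ℕ) : P :=
  ∑ S ∈ Finset.powersetCard j (Finset.Icc 1 m), ∏ i ∈ S, negT i

/-- h_j(-t_1,…,-t_m). -/
def hsymNT (m j : ℕ) : P :=
  ∑ f ∈ (Finset.Icc 1 m).sym j, (Multiset.map negT (f : Multiset ℕ)).prod

/-- h^r_j(-t): complete homogeneous for r ≥ 0, elementary in |r| variables for r < 0,
and 0 for j < 0. -/
def hNT (r j : ℤ) : P :=
  if j < 0 then 0
  else if 0 ≤ r then hsymNT r.toNat j.toNat
  else esymNT (-r).toNat j.toNat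

/-- c^r_p = Σ_{j=0}^p c_{p-j} h^r_j(-t). -/
def cc (r p : ℤ) : P :=
  ∑ j ∈ Finset.range (p.toNat + 1), cvar (p - j) * hNT r j

/-- c^β_α = Π_i c^{β_i}_{α_i} (sequences are indexed from 1; entry 0 is inert since c^r_0 = 1). -/
def cmon (β α : ℕ → ℤ) : P := ∏ᶠ i, cc (β i) (α i)

/-- The sequence obtained from α by the raising-operator monomial Π_{(i,j)} R_{ij}^{n(i,j)}. -/
def raiseSeq (n : (ℕ × ℕ) →₀ ℕ) (α : ℕ → ℤ) : ℕ → ℤ := fun m =>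
  α m + ∑ p ∈ n.support, (n p : ℤ) * ((if p.1 = m then 1 else 0) - (if p.2 = m then 1 else 0))

/-- Coefficient of R^m in the factor attached to one pair: (1-R) if `a` only,
(1+R)⁻¹ if `b` only, (1-R)(1+R)⁻¹ if both, 1 if neither (only evaluated at m ≥ 1). -/
def pairCoeff (a b : Prop) (m : ℕ) : ℤ :=
  if a then (if b then 2 * (-1 : ℤ)^m else if m ≤ 1 then (-1 : ℤ)^m else 0)
  else (if b then (-1 : ℤ)^m else 0)

def roCoeff (A B : Set (ℕ × ℕ)) (n : (ℕ × ℕ) →₀ ℕ) : ℤ :=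
  ∏ p ∈ n.support, pairCoeff (p ∈ A) (p ∈ B) (n p)

/-- Apply the raising operator expression Π_{p∈A}(1-R_p) · Π_{p∈B}(1+R_p)⁻¹ to c^β_α. -/
def applyRO (A B : Set (ℕ × ℕ)) (β α : ℕ → ℤ) : P :=
  ∑ᶠ n : (ℕ × ℕ) →₀ ℕ, (roCoeff A B n) • cmon β (raiseSeq n α)

/-- The set Δ° of all pairs (i,j) with 1 ≤ i < j. -/
def Upper : Set (ℕ × ℕ) := {p | 1 ≤ p.1 ∧ p.1 < p.2}

/-- A valid set of pairs: a finite order ideal of Δ°. -/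
def ValidPairs (D : Set (ℕ × ℕ)) : Prop :=
  D ⊆ Upper ∧ D.Finite ∧
    ∀ p ∈ D, ∀ q ∈ Upper, q.1 ≤ p.1 → q.2 ≤ p.2 → q ∈ D

/-- a_j(D) = #{i < j : (i,j) ∉ D}. -/
def aD (D : Set (ℕ × ℕ)) (j : ℕ) : ℕ :=
  ((Finset.Ico 1 j).filter (fun i => (i, j) ∉ D)).card

/-- γ_j(D,μ) = k + 1 - μ_j + a_j(D). -/
def gammaSeq (k : ℕ) (D : Set (ℕ × ℕ)) (μ : ℕ → ℤ) (j : ℕ) : ℤ :=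
  (k : ℤ) + 1 - μ j + aD D j

/-- T(D,μ) = R^D c^{γ(D,μ)}_μ, where R^D = Π_{i<j}(1-R_{ij}) Π_{(i,j)∈D}(1+R_{ij})⁻¹. -/
def Tpol (k : ℕ) (D : Set (ℕ × ℕ)) (μ : ℕ → ℤ) : P :=
  applyRO Upper D (gammaSeq k D μ) μ

def FinSupp (α : ℕ → ℤ) : Prop := ∃ N, ∀ m, N ≤ m → α m = 0

/-- Partitions, as integer sequences indexed from 1 (entry 0 is 0). -/
def IsPartition (lam : ℕ → ℤ) : Prop :=
  lam 0 = 0 ∧ (∀ i, 1 ≤ i → 0 ≤ lam i) ∧ (∀ i, 1 ≤ i → lam (i+1) ≤ lam i) ∧ FinSupp lam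

/-- k-strict partitions: parts greater than k are distinct. -/
def IsKStrict (k : ℕ) (lam : ℕ → ℤ) : Prop :=
  IsPartition lam ∧ ∀ i, 1 ≤ i → (k : ℤ) < lam i → lam (i+1) < lam i

/-- C(λ) = {(i,j) : 1 ≤ i < j, λ_i + λ_j > 2k + j - i}. -/
def Cset (k : ℕ) (lam : ℕ → ℤ) : Set (ℕ × ℕ) :=
  {p | 1 ≤ p.1 ∧ p.1 < p.2 ∧ 2*(k:ℤ) + (p.2:ℤ) - (p.1:ℤ) < lam p.1 + lam p.2}

/-- β_j(λ) = k + 1 - λ_j + #{i < j : (i,j) ∉ C(λ)}. -/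
def betaSeq (k : ℕ) (lam : ℕ → ℤ) (j : ℕ) : ℤ :=
  (k : ℤ) + 1 - lam j + ((Finset.Ico 1 j).filter (fun i => (i, j) ∉ Cset k lam)).card

/-- The double theta polynomial Θ_λ(c|t) = R^λ c^{β(λ)}_λ. -/
def Theta (k : ℕ) (lam : ℕ → ℤ) : P :=
  applyRO Upper (Cset k lam) (betaSeq k lam) lam

def zeroSeq : ℕ → ℤ := fun _ => 0

/-- The single theta polynomial Θ_λ(c) = R^λ c_λ. -/
def ThetaSingle (k : ℕ) (lam : ℕ → ℤ) : P :=
  applyRO Upper (Cset k lam) zeroSeq lam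

/-- The ideal generated by I^{(k)} in ℤ[c,t]. -/
def Ik (k : ℕ) : Ideal P :=
  Ideal.span {x | ∃ p : ℕ, k < p ∧
    x = cvar (p:ℤ) * cvar (p:ℤ)
      + 2 * ∑ i ∈ Finset.Icc 1 p, (-1 : P)^i * (cvar ((p : ℤ) + i) * cvar ((p : ℤ) - i))}

/-- ℤ[t] = polynomials in t₁, t₂, …; variable n stands for t_{n+1}. -/
abbrev Zt : Type := MvPolynomial ℕ ℤ

/-- The embedding ℤ[t] → ℤ[c,t]. -/
def tEmbed : Zt →+* P :=
  (MvPolynomial.aeval (fun n : ℕ => (MvPolynomial.X (Sum.inr (n+1)) : P))).toRingHom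

/-- α ↦ α + r·ε_j. -/
def addAt (α : ℕ → ℤ) (j : ℕ) (r : ℤ) : ℕ → ℤ := fun m => α m + if m = j then r else 0

def epsSeq (j : ℕ) : ℕ → ℤ := fun m => if m = j then 1 else 0

/-- The sequence (λ_1,…,λ_{j-1}, r, s, μ_{j+2},…) with prescribed entries r, s at j, j+1. -/
def twoSet (ν : ℕ → ℤ) (j : ℕ) (r s : ℤ) : ℕ → ℤ :=
  fun m => if m = j then r else if m = j+1 then s else ν m

/-- Pairs (i,j) with 1 ≤ i < j ≤ ℓ. -/
def BddPairs (ℓ : ℕ) : Set (ℕ × ℕ) := {p | 1 ≤ p.1 ∧ p.1 < p.2 ∧ p.2 ≤ ℓ}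

/-- Boxes [r,c] and [r',c'] are k-related: |c-k-1| + r = |c'-k-1| + r'. -/
def kRel (k : ℕ) (r c r' c' : ℤ) : Prop :=
  |c - (k:ℤ) - 1| + r = |c' - (k:ℤ) - 1| + r'

/-- Case (i) of λ → μ: μ is obtained from λ by adding a single box (in some row h). -/
def ArrowBox (lam μ : ℕ → ℤ) : Prop :=
  ∃ h : ℕ, 1 ≤ h ∧ ∀ m, μ m = lam m + if m = h then 1 else 0

/-- Case (ii) of λ → μ: remove r boxes from a column c ≤ k of λ (giving ν) and add r+1
boxes to a single row h of ν, so that the removed boxes and the bottom box of μ in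
column c are each k-related to one of the added boxes. -/
def ArrowMove (k : ℕ) (lam μ : ℕ → ℤ) : Prop :=
  ∃ c h r : ℕ, 1 ≤ c ∧ c ≤ k ∧ 1 ≤ h ∧ 1 ≤ r ∧
    ∃ ν : ℕ → ℤ, IsPartition ν ∧
      ∃ S : Finset ℕ, S.card = r ∧
        (∀ x ∈ S, 1 ≤ x ∧ lam x = (c:ℤ) ∧ ν x = (c:ℤ) - 1) ∧
        (∀ x, x ∉ S → ν x = lam x) ∧
        (∀ m, μ m = ν m + if m = h then (r:ℤ) + 1 else 0) ∧
        (∀ x ∈ S, ∃ y : ℤ, ν h + 1 ≤ y ∧ y ≤ ν h + r + 1 ∧ kRel k x c h y) ∧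
        (∀ b : ℕ, 1 ≤ b → (c:ℤ) ≤ μ b → μ (b+1) < (c:ℤ) →
          ∃ y : ℤ, ν h + 1 ≤ y ∧ y ≤ ν h + r + 1 ∧ kRel k b c h y)

/-- λ → μ for k-strict partitions. -/
def ChevArrow (k : ℕ) (lam μ : ℕ → ℤ) : Prop :=
  IsKStrict k μ ∧ (ArrowBox lam μ ∨ ArrowMove k lam μ)

/-- The Chevalley coefficient e_{λμ}: 2 iff μ ⊃ λ with added box neither in column k+1
nor k-related to a bottom box in one of the first k columns of λ; 1 otherwise. -/
def eCoeff (k : ℕ) (lam μ : ℕ → ℤ) : ℤ :=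
  if ∃ h : ℕ, 1 ≤ h ∧ (∀ m, μ m = lam m + if m = h then 1 else 0) ∧
      lam h + 1 ≠ (k:ℤ) + 1 ∧
      ¬ ∃ c x : ℕ, 1 ≤ c ∧ c ≤ k ∧ 1 ≤ x ∧ (c:ℤ) ≤ lam x ∧ lam (x+1) < (c:ℤ) ∧
          kRel k x c h (lam h + 1)
  then 2 else 1

/-- Correspondence between k-strict partitions contained in the (n-k)×(n+k) rectangle and
k-Grassmannian elements of W_n (one-line notation w : ℕ → ℤ on indices 1..n). -/
def GrassCorrespond (k n : ℕ) (w : ℕ → ℤ) (lam : ℕ → ℤ) : Prop :=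
  (∀ m, 1 ≤ m → m ≤ n → 1 ≤ (w m).natAbs ∧ (w m).natAbs ≤ n) ∧
  (∀ m m', 1 ≤ m → m ≤ n → 1 ≤ m' → m' ≤ n → (w m).natAbs = (w m').natAbs → m = m') ∧
  (∀ m, 1 ≤ m → m ≤ k → 0 < w m) ∧
  (∀ m, 1 ≤ m → m + 1 ≤ k → w m < w (m+1)) ∧
  (∀ m, k + 1 ≤ m → m + 1 ≤ n → w m < w (m+1)) ∧
  (∀ i, 1 ≤ i → k + i ≤ n →
    (w (k+i) < 0 → lam i = (k:ℤ) + ((w (k+i)).natAbs : ℤ)) ∧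
    (0 < w (k+i) → lam i = (((Finset.Icc 1 k).filter (fun p => w (k+i) < w p)).card : ℤ))) ∧
  (∀ i, n - k < i → lam i = 0)

/-- The simple reflection s_i acting on the values ±1, …, ±n of signed permutations. -/
def sRefl (i : ℕ) (x : ℤ) : ℤ :=
  if i = 0 then (if x = 1 then -1 else if x = -1 then 1 else x)
  else if x = (i:ℤ) then (i:ℤ)+1
  else if x = (i:ℤ)+1 then (i:ℤ)
  else if x = -(i:ℤ) then -((i:ℤ)+1)
  else if x = -((i:ℤ)+1) then -(i:ℤ)
  else x

/-- Images of the variables under the automorphism s_i of ℤ[c,t]. -/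
def sImage (i : ℕ) : (ℕ ⊕ ℕ) → P
  | Sum.inl p =>
      if i = 0 then
        (if p = 0 then MvPolynomial.X (Sum.inl 0) else
          cvar (p:ℤ) + 2 * ∑ j ∈ Finset.Icc 1 p, (negT 1)^j * cvar ((p:ℤ) - (j:ℤ)))
      else MvPolynomial.X (Sum.inl p)
  | Sum.inr m =>
      if i = 0 then (if m = 1 then negT 1 else MvPolynomial.X (Sum.inr m))
      else if m = i then MvPolynomial.X (Sum.inr (i+1))
      else if m = i+1 then MvPolynomial.X (Sum.inr i)
      else MvPolynomial.X (Sum.inr m)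

/-- The ring endomorphism s_i of ℤ[c,t]. -/
def sAut (i : ℕ) : P →+* P := (MvPolynomial.aeval (sImage i)).toRingHom

/-- Denominator of the divided difference ∂_i: 2t₁ for i = 0, t_{i+1} - t_i for i ≥ 1. -/
def dden (i : ℕ) : P :=
  if i = 0 then 2 * MvPolynomial.X (Sum.inr 1)
  else MvPolynomial.X (Sum.inr (i+1)) - MvPolynomial.X (Sum.inr i)

/-- The divided difference operator ∂_i: the (unique, since P is a domain) quotient
(f - s_i f)/(denominator) whenever the division is exact. -/
def ddiff (i : ℕ) (f : P) : P :=
  if h : ∃ g : P, f - sAut i f = dden i * g then h.choose else 0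

/-!
Only raising monomials `R^n` supported on pairs `i < j ≤ ℓ` contribute to `Θ_λ`: otherwise the
largest row index `j` touched by `R^n` exceeds `ℓ`, and the `j`-th part of `R^n λ` is negative.
On such monomials `R^λ` factors as `∏_{A_ℓ(λ)} (1 + R_{ij}) · ∏_{i<j≤ℓ} (1 - R_{ij})(1 + R_{ij})⁻¹`,
because `1 - R = (1 + R)(1 - R)(1 + R)⁻¹` on the pairs outside `C(λ)`. Expanding the first
product as `∑_S R^S` and letting `R^S` act on the subscript turns each term into
`Q^{β(λ)}_{ν(S)}`. All the series are finite sums: `R_{ij}` lowers the weight `∑ m λ_m` by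
`j - i`, and the weight of a subscript with nonnegative parts is nonnegative.
-/

lemma hNT_zero (r : ℤ) : hNT r 0 = 1 := by
  unfold hNT
  rw [if_neg (by norm_num)]
  split
  · simp only [hsymNT, Int.toNat_zero, Finset.sym_zero, Finset.sum_singleton]
    rfl
  · simp [esymNT]

lemma cc_zero (r : ℤ) : cc r 0 = 1 := by
  simp [cc, hNT_zero, cvar]

lemma cc_of_neg (r : ℤ) {p : ℤ} (hp : p < 0) : cc r p = 0 := by
  rw [cc, Int.toNat_of_nonpos hp.le]
  simp [cvar, hp, hp.ne]

lemma finSupp_of_forall_lt {α : ℕ → ℤ} {ℓ : ℕ} (hα : ∀ j, ℓ < j → α j = 0) : FinSupp α :=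
  ⟨ℓ + 1, fun m hm => hα m (by omega)⟩

lemma cmon_eq_zero_of_neg (β : ℕ → ℤ) {α : ℕ → ℤ} (hα : FinSupp α) {i : ℕ} (hi : α i < 0) :
    cmon β α = 0 := by
  obtain ⟨N, hN⟩ := hα
  refine finprod_eq_zero _ i (cc_of_neg _ hi) ((Finset.range N).finite_toSet.subset fun j hj => ?_)
  by_contra hjN
  exact hj (by simp only [hN j (by simpa using hjN), cc_zero])

lemma raiseSeq_apply (n : (ℕ × ℕ) →₀ ℕ) (α : ℕ → ℤ) (m : ℕ) :
    raiseSeq n α m =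
      α m + n.sum fun p c => (c : ℤ) * ((if p.1 = m then 1 else 0) - if p.2 = m then 1 else 0) :=
  rfl

lemma raiseSeq_raiseSeq (n d : (ℕ × ℕ) →₀ ℕ) (α : ℕ → ℤ) :
    raiseSeq n (raiseSeq d α) = raiseSeq (n + d) α := by
  funext m
  simp only [raiseSeq_apply]
  rw [Finsupp.sum_add_index' (by simp) (by intros; push_cast; ring)]
  ring

lemma toFinsupp_val_apply {ι : Type*} [DecidableEq ι] (S : Finset ι) (i : ι) :
    S.val.toFinsupp i = if i ∈ S then 1 else 0 := by
  simp [Multiset.toFinsupp_apply, Multiset.count_eq_of_nodup S.nodup]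

lemma raiseSeq_toFinsupp (S : Finset (ℕ × ℕ)) (α : ℕ → ℤ) :
    raiseSeq S.val.toFinsupp α =
      fun m => α m + ∑ p ∈ S, ((if p.1 = m then 1 else 0) - if p.2 = m then 1 else 0) := by
  funext m
  rw [raiseSeq, Multiset.toFinsupp_support, Finset.val_toFinset]
  congr 1
  refine Finset.sum_congr rfl fun p hp => ?_
  rw [toFinsupp_val_apply, if_pos hp, Nat.cast_one, one_mul]

lemma finSupp_raiseSeq {α : ℕ → ℤ} (hα : FinSupp α) (n : (ℕ × ℕ) →₀ ℕ) :
    FinSupp (raiseSeq n α) := by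
  obtain ⟨N, hN⟩ := hα
  refine ⟨max N (n.support.sup fun p => max p.1 p.2) + 1, fun m hm => ?_⟩
  rw [raiseSeq, hN m (by omega), zero_add]
  refine Finset.sum_eq_zero fun p hp => ?_
  have := Finset.le_sup (f := fun p => max p.1 p.2) hp
  rw [if_neg (by omega), if_neg (by omega), sub_zero, mul_zero]

lemma exists_raiseSeq_neg {α : ℕ → ℤ} {ℓ : ℕ} (hα : ∀ j, ℓ < j → α j = 0)
    {n : (ℕ × ℕ) →₀ ℕ} (hn : ∀ p ∈ n.support, p.1 < p.2) {q : ℕ × ℕ} (hq : q ∈ n.support)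
    (hqℓ : ℓ < q.2) : ∃ j, raiseSeq n α j < 0 := by
  obtain ⟨p₀, hp₀, hp₀max⟩ := Finset.exists_mem_eq_sup n.support ⟨q, hq⟩ Prod.snd
  set j := n.support.sup Prod.snd
  have hle : ∀ p ∈ n.support, p.2 ≤ j := fun p hp => Finset.le_sup (f := Prod.snd) hp
  refine ⟨j, ?_⟩
  rw [raiseSeq, hα j (hqℓ.trans_le (hle q hq)), zero_add, ← Finset.sum_const_zero]
  refine Finset.sum_lt_sum (fun p hp => ?_) ⟨p₀, hp₀, ?_⟩
  · rw [if_neg (by have := hn p hp; have := hle p hp; omega)]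
    split_ifs <;> simp
  · have hpos : 0 < n p₀ := Nat.pos_of_ne_zero (Finsupp.mem_support_iff.mp hp₀)
    rw [if_neg (by have := hn p₀ hp₀; omega), if_pos hp₀max.symm]
    simpa using hpos

lemma raiseSeq_nonneg_of_cmon_ne_zero {β α : ℕ → ℤ} (hα : FinSupp α) {n : (ℕ × ℕ) →₀ ℕ}
    (h : cmon β (raiseSeq n α) ≠ 0) (m : ℕ) : 0 ≤ raiseSeq n α m :=
  not_lt.mp fun hm => h (cmon_eq_zero_of_neg β (finSupp_raiseSeq hα n) hm)

lemma sum_mul_raiseSeq (α : ℕ → ℤ) {n : (ℕ × ℕ) →₀ ℕ} {M : Finset ℕ}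
    (hM : ∀ p ∈ n.support, p.1 ∈ M ∧ p.2 ∈ M) :
    ∑ m ∈ M, (m : ℤ) * raiseSeq n α m =
      ∑ m ∈ M, (m : ℤ) * α m - ∑ p ∈ n.support, (n p : ℤ) * (p.2 - p.1) := by
  simp only [raiseSeq, mul_add, Finset.sum_add_distrib, Finset.mul_sum]
  rw [Finset.sum_comm, sub_eq_add_neg, ← Finset.sum_neg_distrib]
  congr 1
  refine Finset.sum_congr rfl fun p hp => ?_
  simp [mul_sub, mul_ite, Finset.sum_sub_distrib, Finset.sum_ite_eq, hM p hp]
  ring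

lemma finite_setOf_cmon_raiseSeq_ne_zero (β : ℕ → ℤ) {α : ℕ → ℤ} (hα : FinSupp α)
    {T : Finset (ℕ × ℕ)} (hT : ∀ p ∈ T, p.1 < p.2) :
    {n : (ℕ × ℕ) →₀ ℕ | n.support ⊆ T ∧ cmon β (raiseSeq n α) ≠ 0}.Finite := by
  set M := T.image Prod.fst ∪ T.image Prod.snd
  refine (Set.finite_Iic ((∑ m ∈ M, (m : ℤ) * α m).toNat • T.val.toFinsupp)).subset ?_
  rintro n ⟨hnT, hn⟩
  refine Finsupp.le_def.mpr fun p => ?_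
  by_cases hp : p ∈ n.support
  · have hM : ∀ q ∈ n.support, q.1 ∈ M ∧ q.2 ∈ M := fun q hq =>
      ⟨Finset.mem_union_left _ (Finset.mem_image_of_mem _ (hnT hq)),
        Finset.mem_union_right _ (Finset.mem_image_of_mem _ (hnT hq))⟩
    have hdiff : ∀ q ∈ n.support, (0 : ℤ) ≤ n q * (q.2 - q.1) := fun q hq => by
      have := hT q (hnT hq); exact mul_nonneg (Nat.cast_nonneg _) (by omega)
    have hweight : 0 ≤ ∑ m ∈ M, (m : ℤ) * raiseSeq n α m := Finset.sum_nonneg fun m _ =>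
      mul_nonneg m.cast_nonneg (raiseSeq_nonneg_of_cmon_ne_zero hα hn m)
    have hnp : (n p : ℤ) ≤ n p * (p.2 - p.1) :=
      le_mul_of_one_le_right (by positivity) (by have := hT p (hnT hp); omega)
    have := Finset.single_le_sum hdiff hp
    rw [sum_mul_raiseSeq α hM] at hweight
    simp only [Finsupp.smul_apply, toFinsupp_val_apply, if_pos (hnT hp), smul_eq_mul, mul_one]
    omega
  · simp [Finsupp.notMem_support_iff.mp hp]

lemma finsum_comp_add_right {N M : Type*} [AddCommMonoid N] [IsRightCancelAdd N] [PartialOrder N]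
    [CanonicallyOrderedAdd N] [DecidableLE N] [AddCommMonoid M] (F : N → M) (d : N) :
    ∑ᶠ n, F (n + d) = ∑ᶠ m, if d ≤ m then F m else 0 := by
  rw [← finsum_mem_range (add_left_injective d), finsum_mem_def]
  refine finsum_congr fun m => ?_
  have hrange : m ∈ Set.range (· + d) ↔ d ≤ m := by
    simp [le_iff_exists_add, add_comm, eq_comm]
  by_cases hm : d ≤ m
  · rw [Set.indicator_of_mem (hrange.mpr hm), if_pos hm]
  · rw [Set.indicator_of_notMem (mt hrange.mp hm), if_neg hm]

lemma applyRO_raiseSeq (A B : Set (ℕ × ℕ)) (β α : ℕ → ℤ) (d : (ℕ × ℕ) →₀ ℕ) :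
    applyRO A B β (raiseSeq d α) =
      ∑ᶠ n, (if d ≤ n then roCoeff A B (n - d) else 0) • cmon β (raiseSeq n α) := by
  simp only [applyRO, raiseSeq_raiseSeq, ite_smul, zero_smul]
  rw [← finsum_comp_add_right (fun m => roCoeff A B (m - d) • cmon β (raiseSeq m α))]
  simp only [add_tsub_cancel_right]

lemma roCoeff_eq_prod {A B : Set (ℕ × ℕ)} {n : (ℕ × ℕ) →₀ ℕ} {T : Finset (ℕ × ℕ)}
    (hn : n.support ⊆ T) :
    roCoeff A B n = ∏ p ∈ T, if n p = 0 then 1 else pairCoeff (p ∈ A) (p ∈ B) (n p) :=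
  calc roCoeff A B n = n.prod fun p m => if m = 0 then 1 else pairCoeff (p ∈ A) (p ∈ B) m :=
        Finset.prod_congr rfl fun _ hp => (if_neg (Finsupp.mem_support_iff.mp hp)).symm
    _ = _ := Finsupp.prod_of_support_subset n hn _ fun _ _ => if_pos rfl

lemma roCoeff_eq_zero {A B : Set (ℕ × ℕ)} {n : (ℕ × ℕ) →₀ ℕ} {p : ℕ × ℕ} (hp : p ∈ n.support)
    (hA : p ∉ A) (hB : p ∉ B) : roCoeff A B n = 0 :=
  Finset.prod_eq_zero hp (by simp [pairCoeff, hA, hB])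

/-- The coefficient of `R^m` in `(1 - R)(1 + R)⁻¹`. -/
def ratioCoeff (m : ℕ) : ℤ := if m = 0 then 1 else 2 * (-1) ^ m

lemma ite_pairCoeff_of_mem_of_mem {a b : Prop} (ha : a) (hb : b) (m : ℕ) :
    (if m = 0 then 1 else pairCoeff a b m) = ratioCoeff m := by
  simp [pairCoeff, ratioCoeff, ha, hb]

-- `1 - R = (1 + R) · (1 - R)(1 + R)⁻¹`
lemma ite_pairCoeff_of_mem_of_not_mem {a b : Prop} (ha : a) (hb : ¬b) (m : ℕ) :
    (if m = 0 then 1 else pairCoeff a b m) =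
      ratioCoeff m + if m = 0 then 0 else ratioCoeff (m - 1) := by
  rcases m with _ | _ | m <;> simp [pairCoeff, ratioCoeff, ha, hb, pow_succ]

lemma roCoeff_self_eq_prod {D : Set (ℕ × ℕ)} {n : (ℕ × ℕ) →₀ ℕ} {T : Finset (ℕ × ℕ)}
    (hn : n.support ⊆ T) (hT : ∀ p ∈ T, p ∈ D) :
    roCoeff D D n = ∏ p ∈ T, ratioCoeff (n p) := by
  rw [roCoeff_eq_prod hn]
  exact Finset.prod_congr rfl fun p hp => ite_pairCoeff_of_mem_of_mem (hT p hp) (hT p hp) _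

lemma ite_le_roCoeff_tsub {D : Set (ℕ × ℕ)} {n : (ℕ × ℕ) →₀ ℕ} {S T : Finset (ℕ × ℕ)}
    (hn : n.support ⊆ T) (hST : S ⊆ T) (hT : ∀ p ∈ T, p ∈ D) :
    (if S.val.toFinsupp ≤ n then roCoeff D D (n - S.val.toFinsupp) else 0) =
      ∏ p ∈ T, if p ∈ S then (if n p = 0 then 0 else ratioCoeff (n p - 1))
        else ratioCoeff (n p) := by
  split_ifs with hle
  · rw [roCoeff_self_eq_prod (Finsupp.support_tsub.trans hn) hT]
    refine Finset.prod_congr rfl fun p _ => ?_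
    have hp := hle p
    simp only [Finsupp.tsub_apply, toFinsupp_val_apply] at hp ⊢
    split_ifs at hp ⊢ <;> first | rfl | omega
  · obtain ⟨p, hp⟩ : ∃ p, n p < S.val.toFinsupp p := by
      simpa [Finsupp.le_def] using hle
    rw [toFinsupp_val_apply] at hp
    have hpS : p ∈ S := by by_contra h; simp [h] at hp
    have hnp : n p = 0 := by simp only [hpS, if_true] at hp; omega
    exact (Finset.prod_eq_zero (hST hpS) (by simp [hpS, hnp])).symm

lemma Finset.sum_powerset_prod_ite {ι R : Type*} [CommSemiring R] [DecidableEq ι]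
    {A T : Finset ι} (hAT : A ⊆ T) (u v : ι → R) :
    ∑ S ∈ A.powerset, ∏ p ∈ T, (if p ∈ S then u p else v p) =
      ∏ p ∈ T, if p ∈ A then u p + v p else v p := by
  set u' : ι → R := fun p => if p ∈ A then u p else 0
  have hsplit : ∀ S ∈ A.powerset,
      ∏ p ∈ T, (if p ∈ S then u p else v p) = (∏ p ∈ S, u' p) * ∏ p ∈ T \ S, v p := by
    intro S hS
    have hSA := Finset.mem_powerset.mp hS
    rw [Finset.prod_ite, Finset.filter_mem_eq_inter, Finset.filter_notMem_eq_sdiff,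
      Finset.inter_eq_right.mpr (hSA.trans hAT)]
    congr 1
    exact Finset.prod_congr rfl fun p hp => (if_pos (hSA hp)).symm
  have hsum : ∀ p ∈ T, (if p ∈ A then u p + v p else v p) = u' p + v p := fun p _ => by
    by_cases hp : p ∈ A <;> simp [u', hp]
  rw [Finset.sum_congr rfl hsplit, Finset.prod_congr rfl hsum, Finset.prod_add]
  refine Finset.sum_subset (Finset.powerset_mono.mpr hAT) fun S _ hSA => ?_
  obtain ⟨p, hpS, hpA⟩ := Finset.not_subset.mp (mt Finset.mem_powerset.mpr hSA)
  rw [Finset.prod_eq_zero hpS (if_neg hpA), zero_mul]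

/-- On monomials supported in `T`, `∏_U (1 - R) ∏_C (1 + R)⁻¹ = ∏_A (1 + R) · ∏_D (1 - R)(1 + R)⁻¹`
with `A = T \ C`. -/
lemma roCoeff_eq_sum_powerset {U C D : Set (ℕ × ℕ)} {A T : Finset (ℕ × ℕ)}
    {n : (ℕ × ℕ) →₀ ℕ} (hn : n.support ⊆ T) (hAT : A ⊆ T) (hTU : ∀ p ∈ T, p ∈ U)
    (hTD : ∀ p ∈ T, p ∈ D) (hA : ∀ p ∈ T, p ∈ A ↔ p ∉ C) :
    roCoeff U C n = ∑ S ∈ A.powerset,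
      if S.val.toFinsupp ≤ n then roCoeff D D (n - S.val.toFinsupp) else 0 := by
  rw [Finset.sum_congr rfl fun S hS =>
      ite_le_roCoeff_tsub hn ((Finset.mem_powerset.mp hS).trans hAT) hTD,
    Finset.sum_powerset_prod_ite hAT, roCoeff_eq_prod hn]
  refine Finset.prod_congr rfl fun p hp => ?_
  by_cases hpA : p ∈ A
  · rw [if_pos hpA, ite_pairCoeff_of_mem_of_not_mem (hTU p hp) ((hA p hp).mp hpA), add_comm]
  · rw [if_neg hpA, ite_pairCoeff_of_mem_of_mem (hTU p hp) (not_not.mp (mt (hA p hp).mpr hpA))]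

def bddFinset (ℓ : ℕ) : Finset (ℕ × ℕ) :=
  (Finset.Icc 1 ℓ ×ˢ Finset.Icc 1 ℓ).filter fun p => p.1 < p.2

lemma mem_bddFinset {ℓ : ℕ} {p : ℕ × ℕ} : p ∈ bddFinset ℓ ↔ p ∈ BddPairs ℓ := by
  simp only [bddFinset, BddPairs, Finset.mem_filter, Finset.mem_product, Finset.mem_Icc,
    Set.mem_ofPred_eq]
  omega

/-- `A_ℓ(λ)`. -/
def Aset (k : ℕ) (lam : ℕ → ℤ) (ℓ : ℕ) : Finset (ℕ × ℕ) :=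
  (Finset.Icc 1 ℓ ×ˢ Finset.Icc 1 ℓ).filter
    fun p => p.1 < p.2 ∧ lam p.1 + lam p.2 ≤ 2 * (k : ℤ) + (p.2 : ℤ) - (p.1 : ℤ)

lemma mem_Aset {k ℓ : ℕ} {lam : ℕ → ℤ} {p : ℕ × ℕ} :
    p ∈ Aset k lam ℓ ↔ p ∈ BddPairs ℓ ∧ p ∉ Cset k lam := by
  simp only [Aset, BddPairs, Cset, Finset.mem_filter, Finset.mem_product, Finset.mem_Icc,
    Set.mem_ofPred_eq, not_and, not_lt]
  omega

lemma roCoeff_smul_cmon_eq_sum (k : ℕ) (lam β : ℕ → ℤ) {ℓ : ℕ}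
    (hlam : ∀ j, ℓ < j → lam j = 0) (n : (ℕ × ℕ) →₀ ℕ) :
    roCoeff Upper (Cset k lam) n • cmon β (raiseSeq n lam) =
      ∑ S ∈ (Aset k lam ℓ).powerset,
        (if S.val.toFinsupp ≤ n then roCoeff (BddPairs ℓ) (BddPairs ℓ) (n - S.val.toFinsupp)
          else 0) • cmon β (raiseSeq n lam) := by
  have hAB : ∀ p ∈ Aset k lam ℓ, p ∈ bddFinset ℓ := fun p hp =>
    mem_bddFinset.mpr (mem_Aset.mp hp).1
  rw [← Finset.sum_smul]
  by_cases hn : n.support ⊆ bddFinset ℓ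
  · rw [roCoeff_eq_sum_powerset hn hAB (fun p hp => ?_) (fun p hp => mem_bddFinset.mp hp)
      (fun p hp => ?_)]
    · obtain ⟨h1, h2, -⟩ := mem_bddFinset.mp hp
      exact ⟨h1, h2⟩
    · rw [mem_Aset]
      exact and_iff_right (mem_bddFinset.mp hp)
  obtain ⟨p, hp, hpB⟩ := Finset.not_subset.mp hn
  rw [mem_bddFinset] at hpB
  rw [Finset.sum_eq_zero fun S hS => ?_, zero_smul]
  · by_cases hU : ∀ q ∈ n.support, q ∈ Upper
    · obtain ⟨j, hj⟩ := exists_raiseSeq_neg hlam (fun q hq => (hU q hq).2) hp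
        (by obtain ⟨h1, h2⟩ := hU p hp; by_contra h; exact hpB ⟨h1, h2, by omega⟩)
      rw [cmon_eq_zero_of_neg β (finSupp_raiseSeq (finSupp_of_forall_lt hlam) n) hj, smul_zero]
    · obtain ⟨q, hq, hqU⟩ := not_forall₂.mp hU
      rw [roCoeff_eq_zero hq hqU fun hqC => hqU ⟨hqC.1, hqC.2.1⟩, zero_smul]
  · have hpS : p ∉ S := fun h => hpB (mem_bddFinset.mp (hAB p (Finset.mem_powerset.mp hS h)))
    refine ite_eq_right_iff.mpr fun _ => roCoeff_eq_zero ?_ hpB hpB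
    simpa [Finsupp.tsub_apply, toFinsupp_val_apply, hpS] using hp

lemma hasFiniteSupport_ite_roCoeff_smul_cmon (β lam : ℕ → ℤ) (hfin : FinSupp lam) {ℓ : ℕ}
    {S : Finset (ℕ × ℕ)} (hS : S ⊆ bddFinset ℓ) :
    Function.HasFiniteSupport fun n : (ℕ × ℕ) →₀ ℕ =>
      (if S.val.toFinsupp ≤ n then roCoeff (BddPairs ℓ) (BddPairs ℓ) (n - S.val.toFinsupp)
        else 0) • cmon β (raiseSeq n lam) := by
  have hfinite := finite_setOf_cmon_raiseSeq_ne_zero β hfin (T := bddFinset ℓ)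
    fun p hp => (mem_bddFinset.mp hp).2.1
  refine hfinite.subset fun n hn => ⟨fun p hp => ?_, right_ne_zero_of_smul hn⟩
  by_cases hpS : p ∈ S
  · exact hS hpS
  by_contra hpB
  rw [mem_bddFinset] at hpB
  have hp' : p ∈ (n - S.val.toFinsupp).support := by
    simpa [Finsupp.tsub_apply, toFinsupp_val_apply, hpS] using hp
  exact hn (by simp only [roCoeff_eq_zero hp' hpB hpB, ite_self, zero_smul])

theorem stmt13_general (k : ℕ) (lam : ℕ → ℤ) (ℓ : ℕ)
    (hlen : ∀ i, 1 ≤ i → (lam i ≠ 0 ↔ i ≤ ℓ)) :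
    Theta k lam =
      ∑ S ∈ ((Finset.Icc 1 ℓ ×ˢ Finset.Icc 1 ℓ).filter
          (fun p => p.1 < p.2 ∧ lam p.1 + lam p.2 ≤ 2*(k:ℤ) + (p.2:ℤ) - (p.1:ℤ))).powerset,
        applyRO (BddPairs ℓ) (BddPairs ℓ) (betaSeq k lam)
          (fun m => lam m + ∑ p ∈ S, ((if p.1 = m then 1 else 0) - (if p.2 = m then 1 else 0))) := by
  have hlam : ∀ j, ℓ < j → lam j = 0 := fun j hj =>
    not_not.mp fun h => absurd ((hlen j (by omega)).mp h) (by omega)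
  have hA : ∀ S ∈ (Aset k lam ℓ).powerset, S ⊆ bddFinset ℓ := fun S hS p hp =>
    mem_bddFinset.mpr (mem_Aset.mp (Finset.mem_powerset.mp hS hp)).1
  change _ = ∑ S ∈ (Aset k lam ℓ).powerset, _
  simp only [← raiseSeq_toFinsupp, applyRO_raiseSeq]
  rw [← finsum_sum_comm _ _ fun S hS => hasFiniteSupport_ite_roCoeff_smul_cmon _ _
    (finSupp_of_forall_lt hlam) (hA S hS)]
  exact finsum_congr (roCoeff_smul_cmon_eq_sum k lam (betaSeq k lam) hlam)

theorem stmt13 (k : ℕ) (lam : ℕ → ℤ) (hlam : IsKStrict k lam) (ℓ : ℕ)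
    (hlen : ∀ i, 1 ≤ i → (lam i ≠ 0 ↔ i ≤ ℓ)) :
    Theta k lam =
      ∑ S ∈ ((Finset.Icc 1 ℓ ×ˢ Finset.Icc 1 ℓ).filter
          (fun p => p.1 < p.2 ∧ lam p.1 + lam p.2 ≤ 2*(k:ℤ) + (p.2:ℤ) - (p.1:ℤ))).powerset,
        applyRO (BddPairs ℓ) (BddPairs ℓ) (betaSeq k lam)
          (fun m => lam m + ∑ p ∈ S, ((if p.1 = m then 1 else 0) - (if p.2 = m then 1 else 0))) :=
  stmt13_general k lam ℓ hlen

end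
end

section
/- (a) For all integers p, r and all i ≥ 0: ∂_i(c^r_p) = c^{r+1}_{p−1} if r = i or r = −i, and ∂_i(c^r_p) = 0 otherwise. (b) For all i ≥ 1 and all integers p, q: ∂_i(c^{−i}_p · c^{i}_q) = c^{−i+1}_{p−1} · c^{i+1}_q + c^{−i+1}_p · c^{i+1}_{q−1}. Both identities hold in ℤ[c,t]. -/
open scoped Classical

noncomputable section

/-!
Write `c^r_p = ∑_j c_{p-j} h_j(-t_1,…,-t_r)` for `r ≥ 0`, with `e_j` in place of `h_j` for
`r < 0`. Adjoining one more variable gives the recurrences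
`c^{r+1}_p = c^r_p - t_{r+1} c^{r+1}_{p-1}` and `c^{-r-1}_p = c^{-r}_p - t_{r+1} c^{-r}_{p-1}`.
For `i ≥ 1`, `s_i` fixes the `c`'s and permutes the `t`'s, so it fixes `c^r` unless `|r| = i`,
where it replaces `t_i` by `t_{i+1}`; adjoining `t_i` and `t_{i+1}` in either order then
yields `c^{±i}_p - s_i c^{±i}_p = (t_{i+1} - t_i) c^{±i+1}_{p-1}`. For `i = 0`, the formula
for `s_0 c_p` reads `s_0 c_p = 2 c^1_p - c_p`; together with `s_0 t_1 = -t_1` it makes `c^1_p`,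
and then by the recurrences every `c^r_p` with `r ≠ 0`, invariant under `s_0`, while
`∂_0 c_p = c^1_{p-1}`.
Part (b) follows from the Leibniz rule `∂_i (f g) = ∂_i f · g + s_i f · ∂_i g`.
-/

theorem Int.induction_of_neg {motive : ℤ → Prop} (neg : ∀ p < 0, motive p)
    (pred : ∀ p, motive (p - 1) → motive p) (p : ℤ) : motive p := by
  rcases lt_or_ge p 0 with hp | hp
  · exact neg p hp
  · obtain ⟨n, rfl⟩ := Int.eq_ofNat_of_zero_le hp
    induction n with
    | zero => exact pred 0 (neg _ (by norm_num))
    | succ n ih => exact pred _ (by simpa using ih (by omega))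

namespace DoubleTheta

open Finset

lemma cvar_of_neg {p : ℤ} (hp : p < 0) : cvar p = 0 := by
  rw [cvar, if_neg hp.ne, if_pos hp]

@[simp] lemma cvar_zero : cvar 0 = 1 := if_pos rfl

lemma cvar_natCast {n : ℕ} (hn : n ≠ 0) : cvar n = MvPolynomial.X (Sum.inl n) := by
  rw [cvar, if_neg (by omega), if_neg (by omega), Int.toNat_natCast]

def hNeg (s : Finset ℕ) (j : ℕ) : P :=
  ∑ f ∈ s.sym j, (Multiset.map negT (f : Multiset ℕ)).prod

def eNeg (s : Finset ℕ) (j : ℕ) : P :=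
  ∑ S ∈ s.powersetCard j, ∏ l ∈ S, negT l

@[simp] lemma hNeg_zero (s : Finset ℕ) : hNeg s 0 = 1 := by
  simp only [hNeg, sym_zero, sum_singleton]
  rfl

@[simp] lemma eNeg_zero (s : Finset ℕ) : eNeg s 0 = 1 := by
  simp [eNeg]

lemma hNeg_empty (j : ℕ) : hNeg ∅ j = eNeg ∅ j := by
  cases j with
  | zero => simp
  | succ j => rw [eNeg, powersetCard_eq_empty.2 (by simp), sum_empty]; rfl

lemma hNeg_singleton (a j : ℕ) : hNeg {a} j = negT a ^ j := by
  simp [hNeg, sym_singleton, Sym.coe_replicate, Multiset.map_replicate]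

lemma eNeg_insert {a : ℕ} {s : Finset ℕ} (ha : a ∉ s) (j : ℕ) :
    eNeg (insert a s) (j + 1) = eNeg s (j + 1) + negT a * eNeg s j := by
  have hinj : Set.InjOn (insert a) (s.powersetCard j : Set (Finset ℕ)) := fun S hS T hT h => by
    have hS : a ∉ S := fun h' => ha ((mem_powersetCard.1 hS).1 h')
    have hT : a ∉ T := fun h' => ha ((mem_powersetCard.1 hT).1 h')
    rw [← erase_insert hS, ← erase_insert hT, h]
  rw [eNeg, powersetCard_succ_insert ha, sum_union, sum_image hinj, eNeg, eNeg, mul_sum]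
  · congr 1
    refine sum_congr rfl fun S hS => prod_insert fun h => ha ((mem_powersetCard.1 hS).1 h)
  · refine disjoint_left.2 fun S hS hS' => ?_
    obtain ⟨T, -, rfl⟩ := mem_image.1 hS'
    exact ha ((mem_powersetCard.1 hS).1 (mem_insert_self a T))

lemma hNeg_insert {a : ℕ} {s : Finset ℕ} (ha : a ∉ s) (j : ℕ) :
    hNeg (insert a s) (j + 1) = hNeg s (j + 1) + negT a * hNeg (insert a s) j := by
  have hfree : ((insert a s).sym (j + 1)).filter (a ∉ ·) = s.sym (j + 1) := by
    ext f
    simp only [mem_filter, mem_sym_iff, mem_insert]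
    exact ⟨fun ⟨h, haf⟩ b hb => (h b hb).resolve_left (by rintro rfl; exact haf hb),
      fun h => ⟨fun b hb => Or.inr (h b hb), fun haf => ha (h a haf)⟩⟩
  have hcons : ((insert a s).sym (j + 1)).filter (a ∈ ·) =
      ((insert a s).sym j).image (Sym.cons a) := by
    ext f
    simp only [mem_filter, mem_image, mem_sym_iff]
    constructor
    · rintro ⟨h, haf⟩
      refine ⟨f.erase a haf, fun b hb => h b ?_, Sym.cons_erase haf⟩
      rw [← Sym.cons_erase haf]
      exact Sym.mem_cons_of_mem hb
    · rintro ⟨g, hg, rfl⟩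
      refine ⟨fun b hb => ?_, Sym.mem_cons_self a g⟩
      rcases Sym.mem_cons.1 hb with rfl | hb
      exacts [mem_insert_self b s, hg b hb]
  rw [hNeg, ← sum_filter_not_add_sum_filter _ (a ∈ ·), hfree, hcons,
    sum_image fun f _ g _ h => (Sym.cons_inj_right a f g).1 h, hNeg, hNeg, mul_sum]
  simp only [Sym.coe_cons, Multiset.map_cons, Multiset.prod_cons]

section Equivariance

variable {σ : P →+* P} {e : ℕ ↪ ℕ}

lemma map_hNeg (he : ∀ l, σ (negT l) = negT (e l)) (s : Finset ℕ) (j : ℕ) :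
    σ (hNeg s j) = hNeg (s.map e) j := by
  simp only [hNeg, map_sum, map_multiset_prod, sym_map, sum_map, Function.Embedding.coeFn_mk,
    Sym.coe_map, Multiset.map_map, Function.comp_def, he]

lemma map_eNeg (he : ∀ l, σ (negT l) = negT (e l)) (s : Finset ℕ) (j : ℕ) :
    σ (eNeg s j) = eNeg (s.map e) j := by
  simp only [eNeg, map_sum, map_prod, powersetCard_map, sum_map, he,
    RelEmbedding.coe_toEmbedding, mapEmbedding_apply, prod_map]

end Equivariance

def cSum (F : ℕ → P) (p : ℤ) : P :=
  ∑ j ∈ range (p.toNat + 1), cvar (p - j) * F j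

lemma cSum_of_neg {F : ℕ → P} {p : ℤ} (hp : p < 0) : cSum F p = 0 := by
  rw [cSum, Int.toNat_of_nonpos hp.le, zero_add, sum_range_one, Nat.cast_zero, sub_zero,
    cvar_of_neg hp, zero_mul]

lemma cSum_sub_one (F : ℕ → P) (p : ℤ) :
    cSum F (p - 1) = ∑ j ∈ range p.toNat, cvar (p - 1 - j) * F j := by
  rcases le_or_gt p 0 with hp | hp
  · rw [cSum_of_neg (by omega), Int.toNat_of_nonpos hp, sum_range_zero]
  · rw [cSum, show (p - 1).toNat + 1 = p.toNat by omega]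

lemma cSum_eq_add_mul {F G H : ℕ → P} (x : P) (h0 : F 0 = G 0)
    (hsucc : ∀ j, F (j + 1) = G (j + 1) + x * H j) (p : ℤ) :
    cSum F p = cSum G p + x * cSum H (p - 1) := by
  rw [cSum_sub_one, cSum, cSum, sum_range_succ', sum_range_succ', h0, mul_sum, add_right_comm,
    ← sum_add_distrib]
  congr 1
  refine sum_congr rfl fun j _ => ?_
  rw [hsucc, Nat.cast_succ, sub_add_eq_sub_sub, sub_right_comm]
  ring

lemma cSum_hNeg_insert {a : ℕ} {s : Finset ℕ} (ha : a ∉ s) (p : ℤ) :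
    cSum (hNeg (insert a s)) p = cSum (hNeg s) p + negT a * cSum (hNeg (insert a s)) (p - 1) :=
  cSum_eq_add_mul _ (by simp) (hNeg_insert ha) p

lemma cSum_eNeg_insert {a : ℕ} {s : Finset ℕ} (ha : a ∉ s) (p : ℤ) :
    cSum (eNeg (insert a s)) p = cSum (eNeg s) p + negT a * cSum (eNeg s) (p - 1) :=
  cSum_eq_add_mul _ (by simp) (eNeg_insert ha) p

lemma cSum_hNeg_insert_sub_insert {a b : ℕ} {s : Finset ℕ} (hab : a ≠ b) (ha : a ∉ s)
    (hb : b ∉ s) (p : ℤ) :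
    cSum (hNeg (insert a s)) p - cSum (hNeg (insert b s)) p =
      (negT a - negT b) * cSum (hNeg (insert a (insert b s))) (p - 1) := by
  have hab' : a ∉ insert b s := by simp [hab, ha]
  have hba' : b ∉ insert a s := by simp [hab.symm, hb]
  have h1 := cSum_hNeg_insert hab' p
  have h2 := cSum_hNeg_insert hba' p
  rw [insert_comm] at h2
  linear_combination h1 - h2

lemma cc_natCast (m : ℕ) (p : ℤ) : cc m p = cSum (hNeg (Icc 1 m)) p := by
  refine sum_congr rfl fun j _ => ?_
  rw [hNT, if_neg (by omega), if_pos (by omega)]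
  rfl

lemma cc_neg_natCast (m : ℕ) (p : ℤ) : cc (-m) p = cSum (eNeg (Icc 1 m)) p := by
  refine sum_congr rfl fun j _ => ?_
  rcases eq_or_ne m 0 with rfl | hm
  · rw [hNT, if_neg (by omega), if_pos (by omega)]
    exact congrArg _ (hNeg_empty j)
  · rw [hNT, if_neg (by omega), if_neg (by omega)]
    simp [esymNT, eNeg]

lemma cc_of_neg (r : ℤ) {p : ℤ} (hp : p < 0) : cc r p = 0 :=
  cSum_of_neg hp

lemma cc_zero_left (p : ℤ) : cc 0 p = cvar p := by
  rw [← Nat.cast_zero, cc_natCast, cSum, sum_eq_single 0]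
  · simp
  · intro j _ hj
    obtain ⟨j, rfl⟩ := Nat.exists_eq_succ_of_ne_zero hj
    simp [hNeg]
  · simp

lemma cc_natCast_succ (m : ℕ) (p : ℤ) :
    cc (m + 1) p = cc m p + negT (m + 1) * cc (m + 1) (p - 1) := by
  have h := cSum_hNeg_insert (a := m + 1) (s := Icc 1 m) (by simp) p
  rw [insert_Icc_right_eq_Icc_add_one (by omega)] at h
  simpa only [← cc_natCast, Nat.cast_add_one] using h

lemma cc_neg_natCast_succ (m : ℕ) (p : ℤ) :
    cc (-(m + 1)) p = cc (-m) p + negT (m + 1) * cc (-m) (p - 1) := by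
  have h := cSum_eNeg_insert (a := m + 1) (s := Icc 1 m) (by simp) p
  rw [insert_Icc_right_eq_Icc_add_one (by omega)] at h
  simpa only [← cc_neg_natCast, Nat.cast_add_one] using h

lemma sAut_X (i : ℕ) (v : ℕ ⊕ ℕ) : sAut i (MvPolynomial.X v) = sImage i v :=
  MvPolynomial.aeval_X _ _

lemma map_cSum {σ : P →+* P} (hσ : ∀ q, σ (cvar q) = cvar q) (F : ℕ → P) (p : ℤ) :
    σ (cSum F p) = cSum (fun j => σ (F j)) p := by
  simp only [cSum, map_sum, map_mul, hσ]

lemma dden_ne_zero (i : ℕ) : dden i ≠ 0 := by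
  rcases eq_or_ne i 0 with rfl | hi
  · rw [dden, if_pos rfl]
    exact mul_ne_zero two_ne_zero (MvPolynomial.X_ne_zero _)
  · rw [dden, if_neg hi, sub_ne_zero]
    exact fun h => by simpa using MvPolynomial.X_injective h

lemma ddiff_eq_of_sub_eq {i : ℕ} {f g : P} (h : f - sAut i f = dden i * g) : ddiff i f = g := by
  have hex : ∃ g, f - sAut i f = dden i * g := ⟨g, h⟩
  rw [ddiff, dif_pos hex]
  exact mul_left_cancel₀ (dden_ne_zero i) (hex.choose_spec.symm.trans h)

lemma sub_sAut_mul {i : ℕ} {f g f' g' : P} (hf : f - sAut i f = dden i * f')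
    (hg : g - sAut i g = dden i * g') :
    f * g - sAut i (f * g) = dden i * (f' * g + sAut i f * g') := by
  rw [map_mul]
  linear_combination g * hf + sAut i f * hg

section Transposition

variable {i : ℕ}

lemma sAut_cvar (hi : i ≠ 0) (p : ℤ) : sAut i (cvar p) = cvar p := by
  rcases lt_trichotomy p 0 with hp | rfl | hp
  · rw [cvar_of_neg hp, map_zero]
  · rw [cvar_zero, map_one]
  · lift p to ℕ using hp.le
    rw [cvar_natCast (by omega), sAut_X, sImage, if_neg hi]

lemma sAut_negT (hi : i ≠ 0) (l : ℕ) : sAut i (negT l) = negT (Equiv.swap i (i + 1) l) := by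
  simp only [negT, map_neg, sAut_X, sImage, if_neg hi, Equiv.swap_apply_def]
  split_ifs <;> rfl

lemma map_swap_Icc_of_ne (hi : i ≠ 0) {m : ℕ} (hm : m ≠ i) :
    (Icc 1 m).map (Equiv.swap i (i + 1)).toEmbedding = Icc 1 m := by
  ext x
  simp only [mem_map_equiv, Equiv.symm_swap, mem_Icc, Equiv.swap_apply_def]
  split_ifs <;> omega

lemma sAut_cc_of_ne (hi : i ≠ 0) {r : ℤ} (h₁ : r ≠ i) (h₂ : r ≠ -i) (p : ℤ) :
    sAut i (cc r p) = cc r p := by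
  have he := sAut_negT (i := i) hi
  obtain ⟨m, rfl | rfl⟩ := Int.eq_nat_or_neg r
  · have hm : m ≠ i := by omega
    rw [cc_natCast, map_cSum (sAut_cvar hi)]
    simp only [map_hNeg (e := (Equiv.swap i (i + 1)).toEmbedding) he, map_swap_Icc_of_ne hi hm]
  · have hm : m ≠ i := by omega
    rw [cc_neg_natCast, map_cSum (sAut_cvar hi)]
    simp only [map_eNeg (e := (Equiv.swap i (i + 1)).toEmbedding) he, map_swap_Icc_of_ne hi hm]

lemma map_swap_Icc_succ (n : ℕ) :
    (Icc 1 (n + 1)).map (Equiv.swap (n + 1) (n + 1 + 1)).toEmbedding =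
      insert (n + 1 + 1) (Icc 1 n) := by
  rw [← insert_Icc_right_eq_Icc_add_one (by omega), map_insert,
    map_swap_Icc_of_ne n.succ_ne_zero (by omega)]
  simp

lemma dden_of_ne_zero (hi : i ≠ 0) : dden i = negT i - negT (i + 1) := by
  rw [dden, if_neg hi, negT, negT]
  ring

lemma sub_sAut_cc_self (hi : i ≠ 0) (p : ℤ) :
    cc i p - sAut i (cc i p) = dden i * cc (i + 1) (p - 1) := by
  obtain ⟨n, rfl⟩ := Nat.exists_eq_add_one_of_ne_zero hi
  have himage :
      sAut (n + 1) (cc (n + 1 : ℕ) p) = cSum (hNeg (insert (n + 1 + 1) (Icc 1 n))) p := by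
    rw [cc_natCast, map_cSum (sAut_cvar hi)]
    simp only [map_hNeg (e := (Equiv.swap (n + 1) (n + 1 + 1)).toEmbedding) (sAut_negT hi),
      map_swap_Icc_succ]
  have hIcc : Icc 1 (n + 1 + 1) = insert (n + 1) (insert (n + 1 + 1) (Icc 1 n)) := by
    rw [insert_comm, insert_Icc_right_eq_Icc_add_one (by omega),
      insert_Icc_right_eq_Icc_add_one (by omega)]
  rw [himage, cc_natCast, ← insert_Icc_right_eq_Icc_add_one (by omega),
    cSum_hNeg_insert_sub_insert (by omega) (by simp) (by simp), dden_of_ne_zero hi, ← hIcc,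
    ← cc_natCast, Nat.cast_add_one]

lemma sAut_cc_neg_self (hi : i ≠ 0) (p : ℤ) :
    sAut i (cc (-i) p) = cc (-i + 1) p + negT (i + 1) * cc (-i + 1) (p - 1) := by
  obtain ⟨n, rfl⟩ := Nat.exists_eq_add_one_of_ne_zero hi
  rw [cc_neg_natCast, map_cSum (sAut_cvar hi)]
  simp only [map_eNeg (e := (Equiv.swap (n + 1) (n + 1 + 1)).toEmbedding) (sAut_negT hi),
    map_swap_Icc_succ]
  rw [cSum_eNeg_insert (by simp), ← cc_neg_natCast, ← cc_neg_natCast, Nat.cast_add_one,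
    show -((n : ℤ) + 1) + 1 = -n by ring]

lemma sub_sAut_cc_neg_self (hi : i ≠ 0) (p : ℤ) :
    cc (-i) p - sAut i (cc (-i) p) = dden i * cc (-i + 1) (p - 1) := by
  obtain ⟨n, rfl⟩ := Nat.exists_eq_add_one_of_ne_zero hi
  have hrec := cc_neg_natCast_succ n p
  rw [sAut_cc_neg_self hi, dden_of_ne_zero hi, Nat.cast_add_one,
    show -((n : ℤ) + 1) + 1 = -n by ring]
  linear_combination hrec

end Transposition

lemma sAut_zero_negT_one : sAut 0 (negT 1) = -negT 1 := by
  rw [negT, map_neg, sAut_X, sImage, if_pos rfl, if_pos rfl]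
  rfl

lemma sAut_zero_negT {l : ℕ} (hl : l ≠ 1) : sAut 0 (negT l) = negT l := by
  rw [negT, map_neg, sAut_X, sImage, if_pos rfl, if_neg hl]

lemma cc_one (p : ℤ) : cc 1 p = cSum (fun j => negT 1 ^ j) p := by
  rw [← Nat.cast_one, cc_natCast, Icc_self]
  exact congrArg (cSum · p) (funext (hNeg_singleton 1))

lemma cc_one_eq (p : ℤ) : cc 1 p = cvar p + negT 1 * cc 1 (p - 1) := by
  simpa [cc_zero_left] using cc_natCast_succ 0 p

lemma sAut_zero_cvar (p : ℤ) : sAut 0 (cvar p) = 2 * cc 1 p - cvar p := by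
  rcases lt_trichotomy p 0 with hp | rfl | hp
  · rw [cvar_of_neg hp, cc_of_neg 1 hp, map_zero, mul_zero, sub_zero]
  · rw [cvar_zero, map_one, cc_one_eq, cc_of_neg 1 (by norm_num), cvar_zero]
    ring
  · lift p to ℕ using hp.le
    have hrange : range (p + 1) = insert 0 (Icc 1 p) := by
      ext j
      simp only [mem_range, mem_insert, mem_Icc]
      omega
    rw [cvar_natCast (by omega), sAut_X, sImage, if_pos rfl, if_neg (by omega),
      ← cvar_natCast (by omega), cc_one, cSum, Int.toNat_natCast, hrange, sum_insert (by simp)]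
    simp only [CharP.cast_eq_zero, sub_zero, pow_zero, mul_comm (cvar _)]
    ring

lemma sAut_zero_cc_one (p : ℤ) : sAut 0 (cc 1 p) = cc 1 p := by
  induction p using Int.induction_of_neg with
  | neg p hp => rw [cc_of_neg 1 hp, map_zero]
  | pred p ih =>
    rw [cc_one_eq, map_add, map_mul, ih, sAut_zero_cvar, sAut_zero_negT_one]
    linear_combination 2 * cc_one_eq p

lemma sAut_zero_cc_natCast_succ (n : ℕ) (p : ℤ) :
    sAut 0 (cc (n + 1 : ℕ) p) = cc (n + 1 : ℕ) p := by
  induction n generalizing p with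
  | zero => simpa using sAut_zero_cc_one p
  | succ n ihn =>
    induction p using Int.induction_of_neg with
    | neg p hp => rw [cc_of_neg _ hp, map_zero]
    | pred p ihp =>
      have hrec := cc_natCast_succ (n + 1) p
      rw [← Nat.cast_add_one] at hrec
      rw [hrec, map_add, map_mul, ihn, sAut_zero_negT (by omega), ihp]

lemma sAut_zero_cc_neg_natCast_succ (n : ℕ) (p : ℤ) :
    sAut 0 (cc (-(n + 1 : ℕ)) p) = cc (-(n + 1 : ℕ)) p := by
  induction n generalizing p with
  | zero =>
    have hrec : cc (-1) p = cvar p + negT 1 * cvar (p - 1) := by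
      simpa [cc_zero_left] using cc_neg_natCast_succ 0 p
    rw [Nat.cast_one, hrec, map_add, map_mul, sAut_zero_cvar, sAut_zero_cvar, sAut_zero_negT_one]
    linear_combination 2 * cc_one_eq p
  | succ n ihn =>
    have hrec := cc_neg_natCast_succ (n + 1) p
    rw [← Nat.cast_add_one] at hrec
    rw [hrec, map_add, map_mul, ihn, ihn, sAut_zero_negT (by omega)]

lemma sub_sAut_zero_cc_zero (p : ℤ) : cc 0 p - sAut 0 (cc 0 p) = dden 0 * cc 1 (p - 1) := by
  have hrec := cc_one_eq p
  rw [negT] at hrec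
  rw [cc_zero_left, sAut_zero_cvar, dden, if_pos rfl]
  linear_combination -2 * hrec

lemma sAut_cc_eq_self {i : ℕ} {r : ℤ} (h₁ : r ≠ i) (h₂ : r ≠ -i) (p : ℤ) :
    sAut i (cc r p) = cc r p := by
  rcases eq_or_ne i 0 with rfl | hi
  · obtain ⟨n, rfl | rfl⟩ := Int.eq_nat_or_neg r <;>
      obtain ⟨m, rfl⟩ := Nat.exists_eq_add_one_of_ne_zero (by omega : n ≠ 0)
    exacts [sAut_zero_cc_natCast_succ m p, sAut_zero_cc_neg_natCast_succ m p]
  · exact sAut_cc_of_ne hi h₁ h₂ p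

lemma sub_sAut_cc {i : ℕ} {r : ℤ} (h : r = i ∨ r = -i) (p : ℤ) :
    cc r p - sAut i (cc r p) = dden i * cc (r + 1) (p - 1) := by
  rcases eq_or_ne i 0 with rfl | hi
  · obtain rfl : r = 0 := by omega
    exact sub_sAut_zero_cc_zero p
  · rcases h with rfl | rfl
    exacts [sub_sAut_cc_self hi p, sub_sAut_cc_neg_self hi p]

end DoubleTheta

open DoubleTheta

theorem stmt18 :
    (∀ (i : ℕ) (r p : ℤ),
      ((r = (i:ℤ) ∨ r = -(i:ℤ)) → ddiff i (cc r p) = cc (r + 1) (p - 1)) ∧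
      ((r ≠ (i:ℤ) ∧ r ≠ -(i:ℤ)) → ddiff i (cc r p) = 0)) ∧
    (∀ (i : ℕ), 1 ≤ i → ∀ p q : ℤ,
      ddiff i (cc (-(i:ℤ)) p * cc (i:ℤ) q) =
        cc (-(i:ℤ) + 1) (p - 1) * cc ((i:ℤ) + 1) q
          + cc (-(i:ℤ) + 1) p * cc ((i:ℤ) + 1) (q - 1)) := by
  refine ⟨fun i r p => ⟨fun h => ?_, fun ⟨h₁, h₂⟩ => ?_⟩, fun i hi p q => ?_⟩
  · exact ddiff_eq_of_sub_eq (sub_sAut_cc h p)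
  · exact ddiff_eq_of_sub_eq (by rw [sAut_cc_eq_self h₁ h₂, sub_self, mul_zero])
  · refine ddiff_eq_of_sub_eq ?_
    have hi₀ : i ≠ 0 := Nat.one_le_iff_ne_zero.mp hi
    rw [sub_sAut_mul (sub_sAut_cc_neg_self hi₀ p) (sub_sAut_cc_self hi₀ q),
      sAut_cc_neg_self hi₀]
    linear_combination -dden i * cc (-i + 1) (p - 1) * cc_natCast_succ i q
end
end
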